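/- For every s > p > 1 and every measurable set Ω ⊂ ℝ^d of finite measure, ∑_Q |Q|^{s/p − s} |Ω ∩ Q|^s ≤ C(s,p,d) |Ω|^{s/p}, where the sum is over all dyadic cubes Q in ℝ^d. -/

import Mathlib

/-!
At a fixed scale `k` the cubes `Q` partition `ℝ^d` and `|Ω ∩ Q| ≤ min (|Q|, |Ω|)`, so
`∑_Q |Ω ∩ Q|^s ≤ min (2^{kd(s-1)} |Ω|, |Ω|^s)`. After the weight `2^{kd(s/p-s)}`, the first bound
is `2^{kd(s/p-1)} |Ω|`, which decays geometrically as the cube size `2^{kd}` drops below `|Ω|`,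
and the second is `2^{kd(s/p-s)} |Ω|^s`, which decays geometrically as `2^{kd}` grows past `|Ω|`.
Splitting the scales at `2^{md} ≤ |Ω| < 2^{(m+1)d}` bounds the sum by two geometric series whose
leading terms are at most `|Ω|^{s/p}`.
-/

open MeasureTheory Real ENNReal NNReal

noncomputable section

/-- The dyadic cube `2^k([0,1)^d + n)` in `ℝ^d`. -/
def dyadicCube (d : ℕ) (k : ℤ) (n : Fin d → ℤ) : Set (EuclideanSpace ℝ (Fin d)) :=
  {x | ∀ i : Fin d, (n i : ℝ) * 2 ^ k ≤ x i ∧ x i < ((n i : ℝ) + 1) * 2 ^ k}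

namespace ENNReal

theorem rpow_le_rpow_of_nonpos {x y : ℝ≥0∞} {z : ℝ} (hxy : x ≤ y) (hz : z ≤ 0) :
    y ^ z ≤ x ^ z := by
  rw [← neg_neg z, rpow_neg y, rpow_neg x]
  exact ENNReal.inv_le_inv.2 (rpow_le_rpow hxy (neg_nonneg.2 hz))

theorem rpow_mul_self_of_nonneg {y : ℝ} (hy : 0 ≤ y) (x : ℝ≥0∞) : x ^ y * x = x ^ (y + 1) := by
  rw [rpow_add_of_nonneg _ _ hy zero_le_one, rpow_one]

theorem rpow_sub_one_mul_self {s : ℝ} (hs : 1 ≤ s) (x : ℝ≥0∞) : x ^ (s - 1) * x = x ^ s := by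
  rw [rpow_mul_self_of_nonneg (sub_nonneg.2 hs), sub_add_cancel]

theorem rpow_add_natCast_mul {x : ℝ≥0∞} (hx₀ : x ≠ 0) (hx : x ≠ ∞) (y z : ℝ) (n : ℕ) :
    x ^ (y + n * z) = x ^ y * (x ^ z) ^ n := by
  rw [rpow_add _ _ hx₀ hx, ← rpow_natCast, ← rpow_mul, mul_comm z]

theorem tsum_rpow_le_rpow_sub_one_mul_tsum {ι : Type*} {f : ι → ℝ≥0∞} {M : ℝ≥0∞} {s : ℝ}
    (hs : 1 ≤ s) (hf : ∀ i, f i ≤ M) : ∑' i, f i ^ s ≤ M ^ (s - 1) * ∑' i, f i := by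
  rw [← ENNReal.tsum_mul_left]
  refine ENNReal.tsum_le_tsum fun i => ?_
  rw [← rpow_sub_one_mul_self hs]
  gcongr
  exact hf i

theorem tsum_int_le_of_le_geometric {g : ℤ → ℝ≥0∞} (m : ℤ) {A ρ σ : ℝ≥0∞}
    (h_le : ∀ n : ℕ, g (m - n) ≤ A * ρ ^ n) (h_gt : ∀ n : ℕ, g (m + 1 + n) ≤ A * σ ^ n) :
    ∑' k, g k ≤ ((1 - ρ)⁻¹ + (1 - σ)⁻¹) * A := by
  rw [← (Equiv.addLeft (m + 1)).tsum_eq, tsum_of_nat_of_neg_add_one ENNReal.summable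
    ENNReal.summable]
  have h_le' (n : ℕ) : g (m + 1 + -(n + 1 : ℤ)) ≤ A * ρ ^ n := by
    convert h_le n using 2
    ring
  calc _ ≤ ∑' n : ℕ, A * σ ^ n + ∑' n : ℕ, A * ρ ^ n :=
        add_le_add (ENNReal.tsum_le_tsum h_gt) (ENNReal.tsum_le_tsum h_le')
    _ = ((1 - ρ)⁻¹ + (1 - σ)⁻¹) * A := by
        rw [ENNReal.tsum_mul_left, ENNReal.tsum_mul_left, ENNReal.tsum_geometric,
          ENNReal.tsum_geometric]
        ring

theorem exists_two_rpow_le_lt {V : ℝ≥0∞} (hV₀ : V ≠ 0) (hV : V ≠ ∞) {c : ℝ} (hc : 0 < c) :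
    ∃ m : ℤ, 2 ^ (m * c) ≤ V ∧ V < 2 ^ ((m + 1) * c) := by
  obtain ⟨m, hm⟩ := exists_mem_Ico_zpow hV₀ hV (one_lt_rpow one_lt_two hc)
    (rpow_ne_top_of_nonneg hc.le ofNat_ne_top)
  refine ⟨m, ?_⟩
  have h_zpow (k : ℤ) : ((2 : ℝ≥0∞) ^ c) ^ k = 2 ^ (k * c) := by
    rw [← rpow_intCast, ← rpow_mul, mul_comm]
  simpa [h_zpow] using hm

end ENNReal

section DyadicCube

variable {d : ℕ} {k : ℤ}

theorem dyadicCube_eq_preimage (n : Fin d → ℤ) :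
    dyadicCube d k n = (MeasurableEquiv.toLp 2 (Fin d → ℝ)).symm ⁻¹'
      Set.univ.pi fun i => Set.Ico ((n i : ℝ) * 2 ^ k) ((n i + 1) * 2 ^ k) := by
  ext x
  simp only [Set.mem_preimage, Set.mem_univ_pi, Set.mem_Ico]
  rfl

theorem measurableSet_dyadicCube (n : Fin d → ℤ) : MeasurableSet (dyadicCube d k n) := by
  rw [dyadicCube_eq_preimage]
  exact (MeasurableEquiv.toLp 2 (Fin d → ℝ)).symm.measurable
    (MeasurableSet.univ_pi fun _ => measurableSet_Ico)

theorem volume_dyadicCube (n : Fin d → ℤ) :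
    volume (dyadicCube d k n) = 2 ^ ((k : ℝ) * d) := by
  rw [dyadicCube_eq_preimage,
    (EuclideanSpace.volume_preserving_symm_measurableEquiv_toLp (Fin d)).measure_preimage
      (MeasurableSet.univ_pi fun _ => measurableSet_Ico).nullMeasurableSet, volume_pi_pi]
  simp_rw [Real.volume_Ico, show ∀ y : ℝ, (y + 1) * 2 ^ k - y * 2 ^ k = 2 ^ k by intro; ring]
  rw [Finset.prod_const, Finset.card_univ, Fintype.card_fin, ← ENNReal.rpow_natCast,
    ← Real.rpow_intCast, ← ENNReal.ofReal_rpow_of_pos two_pos, ← ENNReal.rpow_mul]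
  norm_num

theorem mem_dyadicCube_iff {n : Fin d → ℤ} {x : EuclideanSpace ℝ (Fin d)} :
    x ∈ dyadicCube d k n ↔ ∀ i, n i = ⌊x i / 2 ^ k⌋ := by
  have h_pos : (0 : ℝ) < 2 ^ k := zpow_pos two_pos k
  refine forall_congr' fun i => ?_
  rw [eq_comm, Int.floor_eq_iff, le_div_iff₀ h_pos, div_lt_iff₀ h_pos]

theorem pairwise_disjoint_dyadicCube : Pairwise (Function.onFun Disjoint (dyadicCube d k)) := by
  refine fun n n' hne => Set.disjoint_left.2 fun x hx hx' => hne (funext fun i => ?_)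
  rw [mem_dyadicCube_iff.1 hx i, mem_dyadicCube_iff.1 hx' i]

theorem tsum_measure_inter_dyadicCube_le (μ : Measure (EuclideanSpace ℝ (Fin d)))
    (Ω : Set (EuclideanSpace ℝ (Fin d))) :
    ∑' n, μ (Ω ∩ dyadicCube d k n) ≤ μ Ω :=
  calc ∑' n, μ (Ω ∩ dyadicCube d k n)
      ≤ ∑' n, μ (toMeasurable μ Ω ∩ dyadicCube d k n) := by
        gcongr; exact subset_toMeasurable μ Ω
    _ ≤ μ (⋃ n, toMeasurable μ Ω ∩ dyadicCube d k n) :=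
        tsum_meas_le_meas_iUnion_of_disjoint μ
          (fun n => (measurableSet_toMeasurable μ Ω).inter (measurableSet_dyadicCube n))
          fun n n' hne => (pairwise_disjoint_dyadicCube hne).mono inf_le_right inf_le_right
    _ ≤ μ Ω := by
        rw [← measure_toMeasurable Ω]
        exact measure_mono (Set.iUnion_subset fun n => Set.inter_subset_left)

theorem tsum_volume_inter_dyadicCube_rpow_le {s : ℝ} (hs : 1 ≤ s)
    (Ω : Set (EuclideanSpace ℝ (Fin d))) :
    ∑' n, volume (Ω ∩ dyadicCube d k n) ^ s
      ≤ min (2 ^ (k * d * (s - 1)) * volume Ω) (volume Ω ^ s) := by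
  refine le_min ?_ ?_
  · calc _ ≤ (2 ^ ((k : ℝ) * d)) ^ (s - 1) * ∑' n, volume (Ω ∩ dyadicCube d k n) :=
          ENNReal.tsum_rpow_le_rpow_sub_one_mul_tsum hs fun n =>
            (measure_mono Set.inter_subset_right).trans_eq (volume_dyadicCube n)
      _ ≤ _ := by
          rw [← ENNReal.rpow_mul]
          gcongr
          exact tsum_measure_inter_dyadicCube_le volume Ω
  · calc _ ≤ volume Ω ^ (s - 1) * ∑' n, volume (Ω ∩ dyadicCube d k n) :=
          ENNReal.tsum_rpow_le_rpow_sub_one_mul_tsum hs fun n =>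
            measure_mono Set.inter_subset_left
      _ ≤ volume Ω ^ s := by
          rw [← ENNReal.rpow_sub_one_mul_self hs]
          gcongr
          exact tsum_measure_inter_dyadicCube_le volume Ω

end DyadicCube

section LevelSum

variable {c a s : ℝ} {V : ℝ≥0∞}

theorem two_rpow_mul_min_le_of_two_rpow_le (hb : 0 ≤ a + (s - 1)) {m : ℤ}
    (hm : 2 ^ (m * c) ≤ V) (n : ℕ) :
    2 ^ (((m - n : ℤ) : ℝ) * c * a) * min (2 ^ (((m - n : ℤ) : ℝ) * c * (s - 1)) * V) (V ^ s)
      ≤ V ^ (a + s) * (2 ^ (-(c * (a + (s - 1))))) ^ n :=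
  calc _ ≤ 2 ^ (((m - n : ℤ) : ℝ) * c * a) * (2 ^ (((m - n : ℤ) : ℝ) * c * (s - 1)) * V) := by
        gcongr; exact min_le_left _ _
    _ = 2 ^ (m * c * (a + (s - 1))) * (2 ^ (-(c * (a + (s - 1))))) ^ n * V := by
        rw [← mul_assoc, ← ENNReal.rpow_add _ _ two_ne_zero ofNat_ne_top,
          ← ENNReal.rpow_add_natCast_mul two_ne_zero ofNat_ne_top]
        push_cast
        ring_nf
    _ ≤ V ^ (a + (s - 1)) * (2 ^ (-(c * (a + (s - 1))))) ^ n * V := by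
        rw [ENNReal.rpow_mul]
        gcongr
    _ = V ^ (a + s) * (2 ^ (-(c * (a + (s - 1))))) ^ n := by
        rw [mul_right_comm, ENNReal.rpow_mul_self_of_nonneg hb]
        ring_nf

theorem two_rpow_mul_min_le_of_lt_two_rpow (ha : a ≤ 0) (hV₀ : V ≠ 0) (hV : V ≠ ∞) {m : ℤ}
    (hm : V < 2 ^ ((m + 1) * c)) (n : ℕ) :
    2 ^ (((m + 1 + n : ℤ) : ℝ) * c * a)
        * min (2 ^ (((m + 1 + n : ℤ) : ℝ) * c * (s - 1)) * V) (V ^ s)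
      ≤ V ^ (a + s) * (2 ^ (c * a)) ^ n :=
  calc _ ≤ 2 ^ (((m + 1 + n : ℤ) : ℝ) * c * a) * V ^ s := by
        gcongr; exact min_le_right _ _
    _ = 2 ^ ((m + 1) * c * a) * (2 ^ (c * a)) ^ n * V ^ s := by
        rw [← ENNReal.rpow_add_natCast_mul two_ne_zero ofNat_ne_top]
        push_cast
        ring_nf
    _ ≤ V ^ a * (2 ^ (c * a)) ^ n * V ^ s := by
        rw [ENNReal.rpow_mul]
        gcongr ?_ * _ * _
        exact ENNReal.rpow_le_rpow_of_nonpos hm.le ha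
    _ = V ^ (a + s) * (2 ^ (c * a)) ^ n := by
        rw [mul_right_comm, ← ENNReal.rpow_add _ _ hV₀ hV]

theorem exists_tsum_two_rpow_mul_min_le (hc : 0 < c) (ha : a < 0) (hb : 0 < a + (s - 1)) :
    ∃ C : ℝ≥0∞, C ≠ ∞ ∧ ∀ V : ℝ≥0∞, V ≠ ∞ →
      ∑' k : ℤ, 2 ^ (k * c * a) * min (2 ^ (k * c * (s - 1)) * V) (V ^ s)
        ≤ C * V ^ (a + s) := by
  have h_inv_ne_top {x : ℝ} (hx : x < 0) : (1 - (2 : ℝ≥0∞) ^ x)⁻¹ ≠ ∞ :=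
    ENNReal.inv_ne_top.2 (tsub_pos_of_lt (ENNReal.rpow_lt_one_of_one_lt_of_neg one_lt_two hx)).ne'
  refine ⟨(1 - 2 ^ (-(c * (a + (s - 1)))))⁻¹ + (1 - 2 ^ (c * a))⁻¹,
    ENNReal.add_ne_top.2 ⟨h_inv_ne_top (by nlinarith), h_inv_ne_top (by nlinarith)⟩, fun V hV => ?_⟩
  rcases eq_or_ne V 0 with rfl | hV₀
  · simp [ENNReal.zero_rpow_of_pos (show 0 < s by linarith)]
  obtain ⟨m, hm_le, hm_lt⟩ := ENNReal.exists_two_rpow_le_lt hV₀ hV hc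
  exact ENNReal.tsum_int_le_of_le_geometric m
    (two_rpow_mul_min_le_of_two_rpow_le hb.le hm_le)
    (two_rpow_mul_min_le_of_lt_two_rpow ha.le hV₀ hV hm_lt)

end LevelSum

/-- For every `s > p > 1` there is a constant `C = C(s,p,d)` so that for
every measurable `Ω ⊂ ℝ^d` of finite measure,
`∑_Q |Q|^{s/p - s} |Ω ∩ Q|^s ≤ C |Ω|^{s/p}`, the sum over all dyadic cubes `Q`. -/
theorem dyadic_cube_sum_bound (d : ℕ) (hd : 1 ≤ d) (s p : ℝ) (hp : 1 < p) (hs : p < s) :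
    ∃ C : ℝ≥0∞, C ≠ ∞ ∧
      ∀ Ω : Set (EuclideanSpace ℝ (Fin d)), MeasurableSet Ω → volume Ω < ∞ →
        (∑' q : ℤ × (Fin d → ℤ),
            ((2 : ℝ≥0∞) ^ (q.1 * d)) ^ (s / p - s) * (volume (Ω ∩ dyadicCube d q.1 q.2)) ^ s)
          ≤ C * (volume Ω) ^ (s / p) := by
  have hp₀ : 0 < p := by linarith
  have hsp : 1 < s / p := (one_lt_div hp₀).2 hs
  obtain ⟨C, hC, h_sum⟩ := exists_tsum_two_rpow_mul_min_le (c := d) (a := s / p - s) (s := s)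
    (by exact_mod_cast hd) (by linarith [div_lt_self (by linarith : 0 < s) hp]) (by linarith)
  refine ⟨C, hC, fun Ω _ hΩ => ?_⟩
  calc _ = ∑' k : ℤ, 2 ^ (k * d * (s / p - s)) * ∑' n, volume (Ω ∩ dyadicCube d k n) ^ s := by
        rw [ENNReal.tsum_prod']
        refine tsum_congr fun k => ?_
        rw [← ENNReal.tsum_mul_left]
        refine tsum_congr fun n => ?_
        rw [← ENNReal.rpow_intCast, ← ENNReal.rpow_mul]
        push_cast
        rfl
    _ ≤ ∑' k : ℤ, 2 ^ (k * d * (s / p - s))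
          * min (2 ^ (k * d * (s - 1)) * volume Ω) (volume Ω ^ s) := by
        gcongr with k
        exact tsum_volume_inter_dyadicCube_rpow_le (by linarith) Ω
    _ ≤ C * volume Ω ^ (s / p - s + s) := h_sum _ hΩ.ne
    _ = C * volume Ω ^ (s / p) := by rw [sub_add_cancel]
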